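/- Correctness of the reduced representation: let Q be the Minkowski quadratic form Q(x) = x₁² + x₂² − x₃² on ℝ³, let ι be the canonical embedding into the Clifford algebra Cl(Q), let C₀ = (0,0,1), let x ∈ ℝ³ satisfy Q(x) = −1 and x₃ > 0, and let m = (x + C₀)/√(2 + 2x₃) be the midpoint of C₀ and x. Then (ι(m)·ι(C₀)) · ι(C₀) · (ι(C₀)·ι(m)) = ι(x); that is, the even Clifford element y = ι(m)ι(C₀) satisfies M(y)(C₀) = x, where M(y)(w) = y·ι(w)·conj(y). -/

import Mathlib

/-- The Minkowski bilinear form on ℝ³. -/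
def minkowskiBilin : LinearMap.BilinMap ℝ (Fin 3 → ℝ) ℝ :=
  LinearMap.mk₂ ℝ (fun x y => x 0 * y 0 + x 1 * y 1 - x 2 * y 2)
    (by intros; simp; ring) (by intros; simp; ring)
    (by intros; simp; ring) (by intros; simp; ring)

/-- The Minkowski quadratic form Q(x) = x₁² + x₂² − x₃² on ℝ³. -/
def minkowskiQ : QuadraticForm ℝ (Fin 3 → ℝ) := minkowskiBilin.toQuadraticMap

/-- Correctness of the reduced representation: for x on the hyperboloid and
m = mid(C₀, x) = (x + C₀)/√(2 + 2x₃), the even Clifford element y = ι(m)·ι(C₀)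
satisfies y · ι(C₀) · conj(y) = ι(x), where conj(y) = ι(C₀)·ι(m). -/
theorem reduced_representation_correct (x : Fin 3 → ℝ)
    (hx : minkowskiQ x = -1) (hx3 : x 2 > 0)
    (c₀ : Fin 3 → ℝ) (hc₀ : c₀ = ![0, 0, 1])
    (m : Fin 3 → ℝ) (hm : m = fun i => (x i + c₀ i) / Real.sqrt (2 + 2 * x 2)) :
    (CliffordAlgebra.ι minkowskiQ m * CliffordAlgebra.ι minkowskiQ c₀) *
        CliffordAlgebra.ι minkowskiQ c₀ *
        (CliffordAlgebra.ι minkowskiQ c₀ * CliffordAlgebra.ι minkowskiQ m) =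
      CliffordAlgebra.ι minkowskiQ x := by
  set s := Real.sqrt (2 + 2 * x 2) with hs
  have hpos : (0:ℝ) < 2 + 2 * x 2 := by linarith
  have hs2 : s * s = 2 + 2 * x 2 := Real.mul_self_sqrt hpos.le
  have hsne : s ≠ 0 := by positivity
  have hx' : x 0 * x 0 + x 1 * x 1 - x 2 * x 2 = -1 := by
    simpa [minkowskiQ, minkowskiBilin, LinearMap.BilinMap.toQuadraticMap_apply] using hx
  have hQc : minkowskiQ c₀ = -1 := by
    subst hc₀
    simp [minkowskiQ, minkowskiBilin, LinearMap.BilinMap.toQuadraticMap_apply]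
  have hQm : minkowskiQ m = -1 := by
    subst hc₀; subst hm
    simp only [minkowskiQ, minkowskiBilin, LinearMap.BilinMap.toQuadraticMap_apply,
      LinearMap.mk₂_apply]
    simp only [Matrix.cons_val_zero, Matrix.cons_val_one, Matrix.head_cons, Matrix.cons_val_two,
      Matrix.tail_cons]
    field_simp
    nlinarith [hs2, hx']
  have hpol : QuadraticMap.polar minkowskiQ c₀ m = -s := by
    subst hc₀; subst hm
    simp only [minkowskiQ, LinearMap.BilinMap.polar_toQuadraticMap, minkowskiBilin,
      LinearMap.mk₂_apply]
    simp only [Matrix.cons_val_zero, Matrix.cons_val_one, Matrix.head_cons, Matrix.cons_val_two,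
      Matrix.tail_cons]
    field_simp
    nlinarith [hs2]
  have hsm : x = s • m - c₀ := by
    funext i
    subst hm
    simp [Pi.smul_apply, smul_eq_mul]
    field_simp
    ring
  set ι := CliffordAlgebra.ι minkowskiQ
  have e1 : ι c₀ * ι c₀ = algebraMap ℝ _ (-1 : ℝ) := by
    rw [CliffordAlgebra.ι_sq_scalar, hQc]
  have e2 : ι m * ι m = algebraMap ℝ _ (-1 : ℝ) := by
    rw [CliffordAlgebra.ι_sq_scalar, hQm]
  have e3 : ι c₀ * ι m = algebraMap ℝ _ (-s) - ι m * ι c₀ := by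
    rw [CliffordAlgebra.ι_mul_ι_comm, hpol]
  rw [hsm, map_sub, map_smul]
  calc ι m * ι c₀ * ι c₀ * (ι c₀ * ι m)
      = ι m * (ι c₀ * ι c₀) * (ι c₀ * ι m) := by rw [mul_assoc (ι m)]
    _ = ι m * algebraMap ℝ _ (-1 : ℝ) * (algebraMap ℝ _ (-s) - ι m * ι c₀) := by rw [e1, e3]
    _ = s • ι m - ι c₀ := by
          have comm : ∀ (r : ℝ) (a : CliffordAlgebra minkowskiQ),
              a * algebraMap ℝ _ r = r • a := by
            intro r a; rw [← Algebra.commutes, ← Algebra.smul_def]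
          rw [mul_sub]
          congr 1
          · rw [mul_assoc, ← map_mul, comm]; norm_num
          · rw [comm (-1 : ℝ) (ι m), smul_mul_assoc, ← mul_assoc, e2, ← Algebra.smul_def,
              smul_smul]
            norm_num
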